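/- If sup_{v ∈ K} ‖ĝ_n(ω)(v) − g(v)‖ → 0 in probability and max_{1 ≤ i ≤ n} ‖V̂_{i,n}(ω) − V_i(ω)‖ → 0 in probability as n → ∞, then ‖(1/n)·Σ_{i=1}^n Q_i ·ᵥ ĝ_n(V̂_{i,n}) − (1/n)·Σ_{i=1}^n Q_i ·ᵥ g(V_i)‖ → 0 in probability. (Core step of the consistency proof for the plug-in estimator of the average partial effect.) -/

import Mathlib

open MeasureTheory Matrix Filter ProbabilityTheory

/-- Operator norm of a matrix with respect to the Euclidean norms. -/
noncomputable def matrixEuclideanOpNorm {d m : ℕ} (A : Matrix (Fin d) (Fin m) ℝ) : ℝ :=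
  ‖LinearMap.toContinuousLinearMap (Matrix.toEuclideanLin A)‖

/-!
Pointwise, the difference of the two sample averages is at most
`√m · (sup_K ‖ĝ_n - g‖ + c · max_{i<n} ‖V̂_{i,n} - V_i‖) · (1/n) ∑_{i<n} ‖Q_i‖`, where `c` is a
Lipschitz constant of `g` and `√m` compares the sup norm of `Fin m → ℝ` with the Euclidean norm
in which `‖Q_i‖` is measured. The bracket tends to zero in probability, while the sample mean of
the `‖Q_i‖` has expectation `E‖Q_1‖` and is therefore bounded in probability by Markov's
inequality; a product of the two tends to zero in probability.
-/

open scoped ENNReal NNReal Topology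

section BoundedAboveInProbability

variable {Ω : Type*} {mΩ : MeasurableSpace Ω} {μ : Measure Ω}

def BoundedAboveInProbability (μ : Measure Ω) (S : ℕ → Ω → ℝ) : Prop :=
  ∀ δ > 0, ∃ M, ∀ n, μ {ω | M < S n ω} ≤ δ

theorem boundedAboveInProbability_of_integral_le {S : ℕ → Ω → ℝ}
    (hS_nonneg : ∀ n, 0 ≤ᵐ[μ] S n) (hS_int : ∀ n, Integrable (S n) μ) {C : ℝ}
    (hC : ∀ n, ∫ ω, S n ω ∂μ ≤ C) : BoundedAboveInProbability μ S := by
  intro δ hδ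
  have hlintegral : ∀ n, ∫⁻ ω, ENNReal.ofReal (S n ω) ∂μ ≤ ENNReal.ofReal C := fun n => by
    rw [← ofReal_integral_eq_lintegral_ofReal (hS_int n) (hS_nonneg n)]
    exact ENNReal.ofReal_le_ofReal (hC n)
  have hmarkov : Tendsto (fun M => ENNReal.ofReal C / ENNReal.ofReal M) atTop (𝓝 0) := by
    simpa using ENNReal.Tendsto.const_div ENNReal.tendsto_ofReal_atTop
      (Or.inr ENNReal.ofReal_ne_top)
  obtain ⟨M, hM, hM_pos⟩ :=
    ((hmarkov.eventually (gt_mem_nhds hδ)).and (eventually_gt_atTop 0)).exists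
  refine ⟨M, fun n => ?_⟩
  calc μ {ω | M < S n ω} ≤ μ {ω | ENNReal.ofReal M ≤ ENNReal.ofReal (S n ω)} :=
        measure_mono fun ω hω => ENNReal.ofReal_le_ofReal (le_of_lt hω)
    _ ≤ (∫⁻ ω, ENNReal.ofReal (S n ω) ∂μ) / ENNReal.ofReal M :=
        meas_ge_le_lintegral_div (hS_int n).aemeasurable.ennreal_ofReal
          (ENNReal.ofReal_pos.2 hM_pos).ne' ENNReal.ofReal_ne_top
    _ ≤ ENNReal.ofReal C / ENNReal.ofReal M := by gcongr; exact hlintegral n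
    _ ≤ δ := hM.le

theorem integral_sampleMean_eq_of_identDistrib {f : ℕ → Ω → ℝ} (hint : Integrable (f 0) μ)
    (hident : ∀ i, IdentDistrib (f i) (f 0) μ μ) {n : ℕ} (hn : n ≠ 0) :
    ∫ ω, (n : ℝ)⁻¹ * ∑ i ∈ Finset.range n, f i ω ∂μ = ∫ ω, f 0 ω ∂μ := by
  rw [integral_const_mul, integral_finsetSum _ fun i _ => (hident i).integrable_iff.2 hint]
  simp only [fun i => (hident i).integral_eq, Finset.sum_const, Finset.card_range, nsmul_eq_mul]
  field_simp

theorem boundedAboveInProbability_sampleMean_of_identDistrib {f : ℕ → Ω → ℝ}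
    (hf_nonneg : ∀ i, 0 ≤ᵐ[μ] f i) (hint : Integrable (f 0) μ)
    (hident : ∀ i, IdentDistrib (f i) (f 0) μ μ) :
    BoundedAboveInProbability μ fun n ω => (n : ℝ)⁻¹ * ∑ i ∈ Finset.range n, f i ω := by
  refine boundedAboveInProbability_of_integral_le (C := ∫ ω, f 0 ω ∂μ) (fun n => ?_)
    (fun n => ?_) (fun n => ?_)
  · filter_upwards [ae_all_iff.2 hf_nonneg] with ω hω
    exact mul_nonneg (by positivity) (Finset.sum_nonneg fun i _ => hω i)
  · exact (integrable_finsetSum _ fun i _ => (hident i).integrable_iff.2 hint).const_mul _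
  · rcases eq_or_ne n 0 with rfl | hn
    · simpa using integral_nonneg_of_ae (hf_nonneg 0)
    · exact (integral_sampleMean_eq_of_identDistrib hint hident hn).le

theorem BoundedAboveInProbability.tendsto_measure_lt_of_le_mul {S X : ℕ → Ω → ℝ}
    (hS : BoundedAboveInProbability μ S) {A : ℝ → ℕ → Set Ω}
    (hA : ∀ a > 0, Tendsto (fun n => μ (A a n)) atTop (𝓝 0)) {C : ℝ} (hC : 0 ≤ C)
    (hX : ∀ a > 0, ∀ n, ∀ ω ∉ A a n, X n ω ≤ C * a * S n ω) :
    ∀ ε > 0, Tendsto (fun n => μ {ω | ε < X n ω}) atTop (𝓝 0) := by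
  intro ε hε
  rw [ENNReal.tendsto_nhds_zero]
  intro δ hδ
  have hδ2 : 0 < δ / 2 := ENNReal.half_pos hδ.ne'
  obtain ⟨M, hM⟩ := hS (δ / 2) hδ2
  set M' := max M 1
  have hM' : 0 < M' := lt_max_of_lt_right one_pos
  set a := ε / ((C + 1) * M')
  have ha : 0 < a := by positivity
  have hsubset : ∀ n, {ω | ε < X n ω} ⊆ A a n ∪ {ω | M < S n ω} := by
    intro n ω hω
    by_contra h
    simp only [Set.mem_union, Set.mem_ofPred_eq, not_or, not_lt] at h
    have hbound : X n ω ≤ C * a * M' :=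
      (hX a ha n ω h.1).trans (mul_le_mul_of_nonneg_left (h.2.trans (le_max_left _ _))
        (by positivity))
    have hsmall : C * a * M' < ε :=
      calc C * a * M' = C / (C + 1) * ε := by simp only [a]; field_simp
        _ < ε := mul_lt_of_lt_one_left hε ((div_lt_one (by positivity)).2 (lt_add_one C))
    exact lt_irrefl _ ((hbound.trans_lt hsmall).trans hω)
  filter_upwards [ENNReal.tendsto_nhds_zero.1 (hA a ha) (δ / 2) hδ2] with n hn
  calc μ {ω | ε < X n ω} ≤ μ (A a n ∪ {ω | M < S n ω}) := measure_mono (hsubset n)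
    _ ≤ μ (A a n) + μ {ω | M < S n ω} := measure_union_le _ _
    _ ≤ δ / 2 + δ / 2 := add_le_add hn (hM n)
    _ = δ := ENNReal.add_halves δ

end BoundedAboveInProbability
theorem norm_sub_le_of_forall_norm_sub_le_of_lipschitzOnWith {E F : Type*}
    [SeminormedAddCommGroup E] [SeminormedAddCommGroup F] {g ĝ : E → F} {K : Set E} {c : ℝ≥0}
    (hg : LipschitzOnWith c g K) {a b : ℝ} (hĝ : ∀ v ∈ K, ‖ĝ v - g v‖ ≤ a) {u v : E}
    (hu : u ∈ K) (hv : v ∈ K) (huv : ‖u - v‖ ≤ b) : ‖ĝ u - g v‖ ≤ a + c * b :=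
  calc ‖ĝ u - g v‖ ≤ ‖ĝ u - g u‖ + ‖g u - g v‖ := norm_sub_le_norm_sub_add_norm_sub _ _ _
    _ ≤ a + c * b := add_le_add (hĝ u hu) ((hg.norm_sub_le hu hv).trans (by gcongr))

theorem norm_toLp_two_le_sqrt_card_mul {m : ℕ} (x : Fin m → ℝ) :
    ‖WithLp.toLp 2 x‖ ≤ √m * ‖x‖ := by
  simpa [Real.sqrt_eq_rpow, NNReal.coe_rpow] using
    (PiLp.lipschitzWith_toLp 2 (fun _ : Fin m => ℝ)).norm_le_mul (by simp) x

theorem norm_mulVec_le_sqrt_mul_matrixEuclideanOpNorm_mul {d m : ℕ}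
    (A : Matrix (Fin d) (Fin m) ℝ) (x : Fin m → ℝ) :
    ‖A *ᵥ x‖ ≤ √m * matrixEuclideanOpNorm A * ‖x‖ :=
  calc ‖A *ᵥ x‖ ≤ ‖WithLp.toLp 2 (A *ᵥ x)‖ := by
        simpa using (PiLp.lipschitzWith_ofLp 2 _).norm_le_mul (by simp) (WithLp.toLp 2 (A *ᵥ x))
    _ ≤ matrixEuclideanOpNorm A * ‖WithLp.toLp 2 x‖ := by
        simpa [matrixEuclideanOpNorm, Matrix.toLpLin_toLp] using
          (LinearMap.toContinuousLinearMap (Matrix.toEuclideanLin A)).le_opNorm (WithLp.toLp 2 x)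
    _ ≤ √m * matrixEuclideanOpNorm A * ‖x‖ := by
        rw [mul_comm √m, mul_assoc]
        exact mul_le_mul_of_nonneg_left (norm_toLp_two_le_sqrt_card_mul x) (norm_nonneg _)

open scoped Matrix.Norms.L2Operator in
theorem continuous_matrixEuclideanOpNorm_of {d m : ℕ} :
    Continuous fun A : Fin d → Fin m → ℝ => matrixEuclideanOpNorm (Matrix.of A) := by
  change Continuous fun A : Fin d → Fin m → ℝ => ‖(Matrix.of A : Matrix (Fin d) (Fin m) ℝ)‖
  exact continuous_norm.comp continuous_id

theorem norm_sampleMean_mulVec_sub_le {d m n : ℕ} (Q : ℕ → Matrix (Fin d) (Fin m) ℝ)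
    (x y : ℕ → Fin m → ℝ) {b : ℝ} (hb : ∀ i < n, ‖x i - y i‖ ≤ b) :
    ‖(n : ℝ)⁻¹ • ∑ i ∈ Finset.range n, Q i *ᵥ x i - (n : ℝ)⁻¹ • ∑ i ∈ Finset.range n, Q i *ᵥ y i‖
      ≤ √m * b * ((n : ℝ)⁻¹ * ∑ i ∈ Finset.range n, matrixEuclideanOpNorm (Q i)) := by
  rw [← smul_sub, ← Finset.sum_sub_distrib, norm_smul, Real.norm_of_nonneg (by positivity),
    mul_left_comm, Finset.mul_sum]
  refine mul_le_mul_of_nonneg_left ((norm_sum_le _ _).trans (Finset.sum_le_sum fun i hi => ?_))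
    (by positivity)
  have hQ : 0 ≤ √m * matrixEuclideanOpNorm (Q i) := mul_nonneg (Real.sqrt_nonneg _) (norm_nonneg _)
  calc ‖Q i *ᵥ x i - Q i *ᵥ y i‖ = ‖Q i *ᵥ (x i - y i)‖ := by rw [mulVec_sub]
    _ ≤ √m * matrixEuclideanOpNorm (Q i) * ‖x i - y i‖ :=
        norm_mulVec_le_sqrt_mul_matrixEuclideanOpNorm_mul _ _
    _ ≤ √m * matrixEuclideanOpNorm (Q i) * b :=
        mul_le_mul_of_nonneg_left (hb i (Finset.mem_range.1 hi)) hQ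
    _ = √m * b * matrixEuclideanOpNorm (Q i) := mul_right_comm _ _ _

theorem plug_in_sample_average_consistency_general
    {Ω : Type*} {mΩ : MeasurableSpace Ω} (P : Measure Ω)
    (p m d : ℕ)
    (K : Set (Fin p → ℝ))
    (g : (Fin p → ℝ) → (Fin m → ℝ)) (hg : ∃ c : NNReal, LipschitzOnWith c g K)
    (Q : ℕ → Ω → (Fin d → Fin m → ℝ))
    (V : ℕ → Ω → (Fin p → ℝ)) (hVK : ∀ i ω, V i ω ∈ K)
    (hiid_ident : ∀ i,
      IdentDistrib (fun ω => (Q i ω, V i ω)) (fun ω => (Q 0 ω, V 0 ω)) P P)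
    (hQint : Integrable (fun ω => matrixEuclideanOpNorm (Matrix.of (Q 0 ω))) P)
    (ghat : ℕ → Ω → (Fin p → ℝ) → (Fin m → ℝ))
    (Vhat : ℕ → ℕ → Ω → (Fin p → ℝ)) (hVhatK : ∀ n i ω, Vhat n i ω ∈ K)
    (hg_unif : ∀ ε > (0 : ℝ), Tendsto
      (fun (n : ℕ) => P {ω | ∃ v ∈ K, ε < ‖ghat n ω v - g v‖}) atTop (nhds 0))
    (hV_unif : ∀ ε > (0 : ℝ), Tendsto
      (fun (n : ℕ) => P {ω | ∃ i < n, ε < ‖Vhat n i ω - V i ω‖}) atTop (nhds 0)) :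
    ∀ ε > (0 : ℝ), Tendsto
      (fun (n : ℕ) => P {ω | ε <
        ‖(n : ℝ)⁻¹ • (∑ i ∈ Finset.range n, Matrix.of (Q i ω) *ᵥ ghat n ω (Vhat n i ω))
          - (n : ℝ)⁻¹ • (∑ i ∈ Finset.range n, Matrix.of (Q i ω) *ᵥ g (V i ω))‖})
      atTop (nhds 0) := by
  obtain ⟨c, hgc⟩ := hg
  have hQ_bounded : BoundedAboveInProbability P fun n ω =>
      (n : ℝ)⁻¹ * ∑ i ∈ Finset.range n, matrixEuclideanOpNorm (Matrix.of (Q i ω)) :=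
    boundedAboveInProbability_sampleMean_of_identDistrib
      (fun i => ae_of_all _ fun ω => norm_nonneg _) hQint
      (fun i => (hiid_ident i).comp (continuous_matrixEuclideanOpNorm_of.measurable.comp
        measurable_fst))
  refine hQ_bounded.tendsto_measure_lt_of_le_mul
    (A := fun a n => {ω | ∃ v ∈ K, a < ‖ghat n ω v - g v‖} ∪
      {ω | ∃ i < n, a < ‖Vhat n i ω - V i ω‖})
    (fun a ha => tendsto_of_tendsto_of_tendsto_of_le_of_le tendsto_const_nhds
      (by simpa using (hg_unif a ha).add (hV_unif a ha)) (fun _ => bot_le)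
      (fun n => measure_union_le _ _))
    (C := √m * (1 + c)) (by positivity) fun a ha n ω hω => ?_
  simp only [Set.mem_union, Set.mem_ofPred_eq, not_or, not_exists, not_and, not_lt] at hω
  obtain ⟨hghat, hVhat⟩ := hω
  refine (norm_sampleMean_mulVec_sub_le _ _ _ fun i hi =>
    norm_sub_le_of_forall_norm_sub_le_of_lipschitzOnWith hgc hghat (hVhatK n i ω) (hVK i ω)
      (hVhat i hi)).trans_eq ?_
  ring

/-- Core step of the consistency proof for the plug-in estimator of the average partial
effect: if `ĝ_n → g` uniformly on `K` in probability and the generated points `V̂_{i,n}`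
converge uniformly to `V_i` in probability, then the sample average of `Q_i ·ᵥ ĝ_n(V̂_{i,n})`
is asymptotically equivalent (in probability) to the sample average of `Q_i ·ᵥ g(V_i)`. -/
theorem plug_in_sample_average_consistency
    {Ω : Type*} {mΩ : MeasurableSpace Ω} (P : Measure Ω) [IsProbabilityMeasure P]
    (p m d : ℕ) (hp : 0 < p) (hm : 0 < m) (hd : 0 < d)
    (K : Set (Fin p → ℝ)) (hK : IsCompact K)
    (g : (Fin p → ℝ) → (Fin m → ℝ)) (hg : ∃ c : NNReal, LipschitzOnWith c g K)
    (Q : ℕ → Ω → (Fin d → Fin m → ℝ))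
    (V : ℕ → Ω → (Fin p → ℝ)) (hVK : ∀ i ω, V i ω ∈ K)
    (hiid_indep : iIndepFun (fun i ω => (Q i ω, V i ω)) P)
    (hiid_ident : ∀ i,
      IdentDistrib (fun ω => (Q i ω, V i ω)) (fun ω => (Q 0 ω, V 0 ω)) P P)
    (hQint : Integrable (fun ω => matrixEuclideanOpNorm (Matrix.of (Q 0 ω))) P)
    (ghat : ℕ → Ω → (Fin p → ℝ) → (Fin m → ℝ))
    (Vhat : ℕ → ℕ → Ω → (Fin p → ℝ)) (hVhatK : ∀ n i ω, Vhat n i ω ∈ K)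
    (hg_unif : ∀ ε > (0 : ℝ), Tendsto
      (fun (n : ℕ) => P {ω | ∃ v ∈ K, ε < ‖ghat n ω v - g v‖}) atTop (nhds 0))
    (hV_unif : ∀ ε > (0 : ℝ), Tendsto
      (fun (n : ℕ) => P {ω | ∃ i < n, ε < ‖Vhat n i ω - V i ω‖}) atTop (nhds 0)) :
    ∀ ε > (0 : ℝ), Tendsto
      (fun (n : ℕ) => P {ω | ε <
        ‖(n : ℝ)⁻¹ • (∑ i ∈ Finset.range n, Matrix.of (Q i ω) *ᵥ ghat n ω (Vhat n i ω))
          - (n : ℝ)⁻¹ • (∑ i ∈ Finset.range n, Matrix.of (Q i ω) *ᵥ g (V i ω))‖})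
      atTop (nhds 0) :=
  plug_in_sample_average_consistency_general (mΩ := mΩ) P p m d K g hg Q V hVK hiid_ident hQint ghat
    Vhat hVhatK hg_unif hV_unif
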